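/- For binary trees T_1 ∈ Y_k and T_2 ∈ Y_l, the Loday–Ronco product Ψ*(T_1) * Ψ*(T_2) in the Malvenuto–Reutenauer algebra is a sum of elements Ψ*(T) over a multiset of trees T ∈ Y_{k+l}; that is, k[Y_∞] (identified with its image under Ψ*) is closed under the product *. -/

import Mathlib

open Equiv

/-- `σ` is the standardization of the tuple `u`: it preserves relative order. -/
def IsStd {k : ℕ} {α : Type*} [LinearOrder α] (u : Fin k → α) (σ : Equiv.Perm (Fin k)) : Prop :=
  ∀ i j, σ i < σ j ↔ u i < u j

/-- The permutation `σ|_A . τ|_B` (concatenation), where `B = Aᶜ`: the first `k` values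
are the elements of `A` arranged in the relative order prescribed by `σ`, and the last
`l` values are the elements of `Aᶜ` arranged in the relative order prescribed by `τ`. -/
def concatPerm {k l : ℕ} (σ : Equiv.Perm (Fin k)) (τ : Equiv.Perm (Fin l))
    (A : Finset (Fin (k + l))) (hA : A.card = k) : Equiv.Perm (Fin (k + l)) :=
  finSumFinEquiv.symm.trans
    ((Equiv.sumCongr (σ.trans (A.orderIsoOfFin hA).toEquiv)
        (τ.trans ((Aᶜ).orderIsoOfFin
          (by rw [Finset.card_compl, hA, Fintype.card_fin]; omega)).toEquiv)).trans
      ((Equiv.sumCongr (Equiv.refl _)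
          (Equiv.subtypeEquivRight (fun x => Finset.mem_compl))).trans
        (Equiv.sumCompl (· ∈ A))))

/-- The Malvenuto–Reutenauer product `σ * τ`, as the multiset of its summands:
`σ * τ = Σ_{A ⊔ B = {1,…,k+l}, |A| = k} σ|_A . τ|_B`. -/
def mrProd {k l : ℕ} (σ : Equiv.Perm (Fin k)) (τ : Equiv.Perm (Fin l)) :
    Multiset (Equiv.Perm (Fin (k + l))) :=
  (Finset.univ.filter (fun A : Finset (Fin (k + l)) => A.card = k)).attach.val.map
    (fun A => concatPerm σ τ A.1 (by have h := A.2; simp only [Finset.mem_filter] at h; exact h.2))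

/-- Auxiliary recursion (on a fuel bounding the length): the unlabeled binary tree of a
word of distinct integers, obtained by putting the position of the minimum at the root,
with left subtree built from the prefix before the minimum and right subtree from the
suffix after it. -/
def shapeOfAux : ℕ → List ℕ → Tree Unit
  | 0, _ => Tree.nil
  | fuel + 1, l =>
    if l = [] then Tree.nil
    else
      let m := l.min?.getD 0
      let i := l.idxOf m
      Tree.node () (shapeOfAux fuel (l.take i)) (shapeOfAux fuel (l.drop (i + 1)))

/-- The unlabeled binary tree underlying the increasing binary tree of a word. -/
def shapeOfList (l : List ℕ) : Tree Unit := shapeOfAux l.length l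

/-- `Ψ : S_n → Y_n` sends a permutation to the underlying unlabeled binary tree of its
increasing binary tree. -/
def Psi {n : ℕ} (σ : Equiv.Perm (Fin n)) : Tree Unit :=
  shapeOfList (List.ofFn fun i => (σ i : ℕ))

/-- `Ψ*(T) = Σ_{σ : Ψ(σ) = T} σ`, as the multiset of its summands. -/
def PsiStar (n : ℕ) (T : Tree Unit) : Multiset (Equiv.Perm (Fin n)) :=
  (Finset.univ.filter (fun σ : Equiv.Perm (Fin n) => Psi σ = T)).val

/-- The bilinear extension of the Malvenuto–Reutenauer product to formal sums
(multisets) of permutations. -/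
def mrProdSum {k l : ℕ} (s : Multiset (Equiv.Perm (Fin k))) (t : Multiset (Equiv.Perm (Fin l))) :
    Multiset (Equiv.Perm (Fin (k + l))) :=
  s.bind fun σ => t.bind fun τ => mrProd σ τ


/-!
Reading a permutation as the word of its values, `Ψ` only sees the relative order of the
letters: the position of the minimum becomes the root, and the same is done recursively on the
prefix before it and the suffix after it. Consequently the shape of a prefix (suffix) of a word
is determined by the shape of the whole word: it is its restriction to the first (last) nodes
in in-order. On the other hand every `π ∈ S_{k+l}` occurs exactly once in `σ * τ`, namely for
`σ` and `τ` the standardizations of the first `k` and the last `l` letters of `π`. So the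
coefficient of `π` in `Ψ*(T₁) * Ψ*(T₂)` is `1` if `Ψ(π)` restricts to `T₁` and `T₂`, and `0`
otherwise; as this depends on `Ψ(π)` only, the product is the sum of the `Ψ*(T)` over the trees
`T` with these two restrictions.
-/

def minIdx (w : List ℕ) : ℕ := w.idxOf (w.min?.getD 0)

section minIdx

variable {w : List ℕ}

lemma min?_getD_eq_min (hw : w ≠ []) : w.min?.getD 0 = w.min hw := by
  rw [List.min?_eq_some_min hw, Option.getD_some]

lemma minIdx_lt_length (hw : w ≠ []) : minIdx w < w.length := by
  rw [minIdx, min?_getD_eq_min hw]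
  exact List.idxOf_lt_length_of_mem (List.min_mem hw)

lemma minIdx_eq_iff (hw : w ≠ []) {i : ℕ} (hi : i < w.length) :
    minIdx w = i ↔ (∀ j (hj : j < w.length), w[i] ≤ w[j]) ∧ ∀ j (hj : j < i), w[i] < w[j] := by
  rw [minIdx, List.idxOf, List.findIdx_eq hi, min?_getD_eq_min hw]
  simp only [beq_iff_eq, beq_eq_false_iff_ne]
  constructor
  · rintro ⟨hmin, hfirst⟩
    refine ⟨fun j hj => hmin ▸ List.min_le_of_mem (List.getElem_mem hj), fun j hj => ?_⟩
    exact lt_of_le_of_ne (hmin ▸ List.min_le_of_mem (List.getElem_mem _))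
      (hmin ▸ (hfirst j hj).symm)
  · rintro ⟨hle, hlt⟩
    have hmin : w[i] = w.min hw := by
      obtain ⟨j, hj, hj'⟩ := List.getElem_of_mem (List.min_mem hw)
      exact le_antisymm (hj' ▸ hle j hj) (List.min_le_of_mem (List.getElem_mem hi))
    exact ⟨hmin, fun j hj => hmin ▸ (hlt j hj).ne'⟩

lemma getElem_minIdx_le (hw : w ≠ []) {j : ℕ} (hj : j < w.length) :
    w[minIdx w]'(minIdx_lt_length hw) ≤ w[j] :=
  ((minIdx_eq_iff hw (minIdx_lt_length hw)).1 rfl).1 j hj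

lemma getElem_minIdx_lt (hw : w ≠ []) {j : ℕ} (hj : j < minIdx w) :
    w[minIdx w]'(minIdx_lt_length hw) < w[j]'(hj.trans (minIdx_lt_length hw)) :=
  ((minIdx_eq_iff hw (minIdx_lt_length hw)).1 rfl).2 j hj

lemma length_take_minIdx_add_length_drop (hw : w ≠ []) :
    (w.take (minIdx w)).length + (w.drop (minIdx w + 1)).length + 1 = w.length := by
  have := minIdx_lt_length hw
  simp only [List.length_take, List.length_drop]
  omega

lemma minIdx_take {k : ℕ} (h : minIdx w < k) : minIdx (w.take k) = minIdx w := by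
  rcases eq_or_ne w [] with rfl | hw
  · simp
  have hlt := minIdx_lt_length hw
  have hlen : minIdx w < (w.take k).length := by
    simp only [List.length_take]
    omega
  refine (minIdx_eq_iff (List.ne_nil_of_length_pos (by omega)) hlen).2
    ⟨fun j hj => ?_, fun j hj => ?_⟩
  · simpa using getElem_minIdx_le hw (j := j) (by simp only [List.length_take] at hj; omega)
  · simpa using getElem_minIdx_lt hw hj

lemma minIdx_drop {k : ℕ} (h : k ≤ minIdx w) : minIdx (w.drop k) = minIdx w - k := by
  rcases eq_or_ne w [] with rfl | hw
  · simp [minIdx]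
  have hlt := minIdx_lt_length hw
  have hlen : minIdx w - k < (w.drop k).length := by
    simp only [List.length_drop]
    omega
  refine (minIdx_eq_iff (List.ne_nil_of_length_pos (by omega)) hlen).2
    ⟨fun j hj => ?_, fun j hj => ?_⟩
  · simpa [Nat.add_sub_cancel' h] using
      getElem_minIdx_le hw (j := k + j) (by simp only [List.length_drop] at hj; omega)
  · simpa [Nat.add_sub_cancel' h] using getElem_minIdx_lt hw (j := k + j) (by omega)

end minIdx

section shapeOfList

variable {w : List ℕ}

lemma shapeOfAux_nil (f : ℕ) : shapeOfAux f [] = BinaryTree.nil := by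
  cases f <;> rfl

lemma shapeOfAux_succ (f : ℕ) (hw : w ≠ []) :
    shapeOfAux (f + 1) w =
      BinaryTree.node () (shapeOfAux f (w.take (minIdx w))) (shapeOfAux f (w.drop (minIdx w + 1))) := by
  rw [shapeOfAux, if_neg hw]
  rfl

lemma shapeOfAux_congr : ∀ {f₁ f₂ : ℕ} {w : List ℕ}, w.length ≤ f₁ → w.length ≤ f₂ →
    shapeOfAux f₁ w = shapeOfAux f₂ w
  | 0, _, w, h, _ | _, 0, w, _, h => by
    rw [List.eq_nil_of_length_eq_zero (Nat.le_zero.1 h), shapeOfAux_nil, shapeOfAux_nil]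
  | f₁ + 1, f₂ + 1, w, h₁, h₂ => by
    rcases eq_or_ne w [] with rfl | hw
    · rw [shapeOfAux_nil, shapeOfAux_nil]
    have := length_take_minIdx_add_length_drop hw
    rw [shapeOfAux_succ _ hw, shapeOfAux_succ _ hw,
      shapeOfAux_congr (f₁ := f₁) (f₂ := f₂) (by omega) (by omega),
      shapeOfAux_congr (f₁ := f₁) (f₂ := f₂) (by omega) (by omega)]

lemma shapeOfList_of_ne_nil (hw : w ≠ []) :
    shapeOfList w =
      BinaryTree.node () (shapeOfList (w.take (minIdx w))) (shapeOfList (w.drop (minIdx w + 1))) := by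
  have := length_take_minIdx_add_length_drop hw
  obtain ⟨f, hf⟩ : ∃ f, w.length = f + 1 := ⟨_, this.symm⟩
  rw [shapeOfList, hf, shapeOfAux_succ _ hw, shapeOfList, shapeOfList,
    shapeOfAux_congr (f₂ := (w.take _).length) (by omega) le_rfl,
    shapeOfAux_congr (f₂ := (w.drop _).length) (by omega) le_rfl]

@[elab_as_elim]
lemma shapeOfList_induction {P : List ℕ → Prop} (nil : P [])
    (node : ∀ w, w ≠ [] → P (w.take (minIdx w)) → P (w.drop (minIdx w + 1)) → P w)
    (w : List ℕ) : P w := by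
  induction h : w.length using Nat.strong_induction_on generalizing w with
  | _ n ih =>
    rcases eq_or_ne w [] with rfl | hw
    · exact nil
    have := length_take_minIdx_add_length_drop hw
    exact node w hw (ih _ (by omega) _ rfl) (ih _ (by omega) _ rfl)

lemma numNodes_shapeOfList (w : List ℕ) : BinaryTree.numNodes (shapeOfList w) = w.length := by
  induction w using shapeOfList_induction with
  | nil => rfl
  | node w hw ihl ihr =>
    rw [shapeOfList_of_ne_nil hw, BinaryTree.numNodes, ihl, ihr,
      length_take_minIdx_add_length_drop hw]

end shapeOfList

def SamePattern (w w' : List ℕ) : Prop :=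
  w.length = w'.length ∧ ∀ p ∈ w.zip w', ∀ q ∈ w.zip w', p.1 < q.1 ↔ p.2 < q.2

namespace SamePattern

variable {w w' : List ℕ}

lemma take (h : SamePattern w w') (k : ℕ) : SamePattern (w.take k) (w'.take k) := by
  refine ⟨by simp only [List.length_take, h.1], fun p hp q hq => h.2 p ?_ q ?_⟩ <;>
    exact List.mem_of_mem_take (by rwa [List.zip, List.take_zipWith])

lemma drop (h : SamePattern w w') (k : ℕ) : SamePattern (w.drop k) (w'.drop k) := by
  refine ⟨by simp only [List.length_drop, h.1], fun p hp q hq => h.2 p ?_ q ?_⟩ <;>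
    exact List.mem_of_mem_drop (by rwa [List.zip, List.drop_zipWith])

lemma ne_nil (h : SamePattern w w') (hw : w ≠ []) : w' ≠ [] :=
  List.ne_nil_of_length_pos (h.1 ▸ List.length_pos_iff.2 hw)

lemma getElem_lt_getElem_iff (h : SamePattern w w') {i j : ℕ} (hi : i < w.length)
    (hj : j < w.length) : w[i] < w[j] ↔ w'[i]'(h.1 ▸ hi) < w'[j]'(h.1 ▸ hj) := by
  have hlen {m : ℕ} (hm : m < w.length) : m < (w.zip w').length := by
    rw [List.length_zip, ← h.1, min_self]
    exact hm
  simpa using h.2 _ (List.getElem_mem (hlen hi)) _ (List.getElem_mem (hlen hj))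

lemma minIdx_eq (h : SamePattern w w') : minIdx w = minIdx w' := by
  rcases eq_or_ne w [] with rfl | hw
  · rw [List.eq_nil_of_length_eq_zero h.1.symm]
  have hlt := minIdx_lt_length hw
  refine ((minIdx_eq_iff (h.ne_nil hw) (h.1 ▸ hlt)).2 ⟨fun j hj => ?_, fun j hj => ?_⟩).symm
  · exact not_lt.1 fun hc => (getElem_minIdx_le hw (h.1 ▸ hj)).not_gt
      ((h.getElem_lt_getElem_iff _ hlt).2 hc)
  · exact (h.getElem_lt_getElem_iff hlt _).1 (getElem_minIdx_lt hw hj)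

lemma shapeOfList_eq (h : SamePattern w w') : shapeOfList w = shapeOfList w' := by
  induction w using shapeOfList_induction generalizing w' with
  | nil => rw [List.eq_nil_of_length_eq_zero h.1.symm]
  | node w hw ihl ihr =>
    rw [shapeOfList_of_ne_nil hw, shapeOfList_of_ne_nil (h.ne_nil hw), ← h.minIdx_eq,
      ihl (h.take _), ihr (h.drop _)]

end SamePattern

lemma samePattern_ofFn_of_isStd {m n : ℕ} {u : Fin m → Fin n} {σ : Perm (Fin m)}
    (h : IsStd u σ) :
    SamePattern (List.ofFn fun i => (σ i : ℕ)) (List.ofFn fun i => (u i : ℕ)) := by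
  refine ⟨by rw [List.length_ofFn, List.length_ofFn], ?_⟩
  simp only [List.mem_iff_getElem, List.getElem_zip, List.getElem_ofFn, List.length_zip,
    List.length_ofFn, min_self]
  rintro _ ⟨i, hi, rfl⟩ _ ⟨j, hj, rfl⟩
  exact h ⟨i, hi⟩ ⟨j, hj⟩

namespace BinaryTree

variable {α : Type*}

/-- The tree induced on the first `k` nodes in in-order (`dropInorder`: on the remaining ones);
for the tree of a word, the tree of its prefix of length `k` (of the rest of the word). -/
def takeInorder : ℕ → BinaryTree α → BinaryTree α
  | _, nil => nil
  | k, node a L R =>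
    if k ≤ L.numNodes then takeInorder k L else node a L (takeInorder (k - L.numNodes - 1) R)

def dropInorder : ℕ → BinaryTree α → BinaryTree α
  | _, nil => nil
  | k, node a L R =>
    if k ≤ L.numNodes then node a (dropInorder k L) R else dropInorder (k - L.numNodes - 1) R

end BinaryTree

lemma shapeOfList_take (w : List ℕ) (k : ℕ) :
    shapeOfList (w.take k) = (shapeOfList w).takeInorder k := by
  induction w using shapeOfList_induction generalizing k with
  | nil => rw [List.take_nil]; rfl
  | node w hw ihl ihr =>
    have hlt := minIdx_lt_length hw
    have hL : BinaryTree.numNodes (shapeOfList (w.take (minIdx w))) = minIdx w := by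
      rw [numNodes_shapeOfList, List.length_take, min_eq_left hlt.le]
    rw [shapeOfList_of_ne_nil hw, BinaryTree.takeInorder, hL]
    split_ifs with hk
    · rw [← ihl, List.take_take, min_eq_left hk]
    · have hw' : w.take k ≠ [] := List.ne_nil_of_length_pos (by simp only [List.length_take]; omega)
      rw [shapeOfList_of_ne_nil hw', minIdx_take (by omega), List.take_take,
        min_eq_left (by omega), List.drop_take, ← ihr, Nat.sub_sub]

lemma shapeOfList_drop (w : List ℕ) (k : ℕ) :
    shapeOfList (w.drop k) = (shapeOfList w).dropInorder k := by
  induction w using shapeOfList_induction generalizing k with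
  | nil => rw [List.drop_nil]; rfl
  | node w hw ihl ihr =>
    have hlt := minIdx_lt_length hw
    have hL : BinaryTree.numNodes (shapeOfList (w.take (minIdx w))) = minIdx w := by
      rw [numNodes_shapeOfList, List.length_take, min_eq_left hlt.le]
    rw [shapeOfList_of_ne_nil hw, BinaryTree.dropInorder, hL]
    split_ifs with hk
    · have hw' : w.drop k ≠ [] := List.ne_nil_of_length_pos (by simp only [List.length_drop]; omega)
      rw [shapeOfList_of_ne_nil hw', minIdx_drop hk, ← List.drop_take, ihl, List.drop_drop]
      congr 3
      omega
    · rw [← ihr, List.drop_drop]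
      congr 2
      omega

section rankPerm

variable {α : Type*} [LinearOrder α] {m : ℕ} (A : Finset α) (hA : A.card = m) {u : Fin m → α}
  (hu : ∀ i, u i ∈ A) (hinj : Function.Injective u)

noncomputable def rankPerm : Perm (Fin m) :=
  Equiv.ofBijective (fun i => (A.orderIsoOfFin hA).symm ⟨u i, hu i⟩)
    (Finite.injective_iff_bijective.1 fun i j h => hinj <| by simpa using h)

lemma eq_rankPerm_iff {σ : Perm (Fin m)} :
    σ = rankPerm A hA hu hinj ↔ ∀ i, (A.orderIsoOfFin hA (σ i) : α) = u i := by
  simp only [Equiv.ext_iff, rankPerm, Equiv.ofBijective_apply, OrderIso.eq_symm_apply,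
    Subtype.ext_iff]

lemma isStd_rankPerm : IsStd u (rankPerm A hA hu hinj) := by
  intro i j
  rw [← (A.orderIsoOfFin hA).lt_iff_lt, ← Subtype.coe_lt_coe,
    (eq_rankPerm_iff A hA hu hinj).1 rfl i, (eq_rankPerm_iff A hA hu hinj).1 rfl j]

end rankPerm

section concatPerm

variable {k l : ℕ}

lemma card_compl_of_card_eq {A : Finset (Fin (k + l))} (hA : A.card = k) : Aᶜ.card = l := by
  rw [Finset.card_compl, hA, Fintype.card_fin]
  omega

lemma concatPerm_castAdd (σ : Perm (Fin k)) (τ : Perm (Fin l)) {A : Finset (Fin (k + l))}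
    (hA : A.card = k) (i : Fin k) :
    concatPerm σ τ A hA (Fin.castAdd l i) = A.orderIsoOfFin hA (σ i) := by
  simp [concatPerm]

lemma concatPerm_natAdd (σ : Perm (Fin k)) (τ : Perm (Fin l)) {A : Finset (Fin (k + l))}
    (hA : A.card = k) (i : Fin l) :
    concatPerm σ τ A hA (Fin.natAdd k i) = Aᶜ.orderIsoOfFin (card_compl_of_card_eq hA) (τ i) := by
  simp [concatPerm]

def leftValues (π : Perm (Fin (k + l))) : Finset (Fin (k + l)) :=
  Finset.univ.image fun i => π (Fin.castAdd l i)

lemma card_leftValues (π : Perm (Fin (k + l))) : (leftValues π).card = k := by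
  have hinj : Function.Injective fun i => π (Fin.castAdd l i) :=
    π.injective.comp (Fin.castAdd_injective k l)
  rw [leftValues, Finset.card_image_of_injective _ hinj, Finset.card_univ, Fintype.card_fin]

lemma apply_castAdd_mem_leftValues (π : Perm (Fin (k + l))) (i : Fin k) :
    π (Fin.castAdd l i) ∈ leftValues π :=
  Finset.mem_image_of_mem _ (Finset.mem_univ i)

lemma apply_natAdd_mem_compl_leftValues (π : Perm (Fin (k + l))) (i : Fin l) :
    π (Fin.natAdd k i) ∈ (leftValues π)ᶜ := by
  simp only [leftValues, Finset.mem_compl, Finset.mem_image, Finset.mem_univ, true_and,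
    π.injective.eq_iff, not_exists]
  intro j h
  have := j.isLt
  simp only [Fin.ext_iff, Fin.val_castAdd, Fin.val_natAdd] at h
  omega

lemma leftValues_concatPerm (σ : Perm (Fin k)) (τ : Perm (Fin l)) {A : Finset (Fin (k + l))}
    (hA : A.card = k) : leftValues (concatPerm σ τ A hA) = A := by
  refine Finset.eq_of_subset_of_card_le (fun x hx => ?_) (by rw [hA, card_leftValues])
  obtain ⟨i, -, rfl⟩ := Finset.mem_image.1 hx
  rw [concatPerm_castAdd]
  exact Subtype.property _

noncomputable def stdLeft (π : Perm (Fin (k + l))) : Perm (Fin k) :=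
  rankPerm (leftValues π) (card_leftValues π) (apply_castAdd_mem_leftValues π)
    (π.injective.comp (Fin.castAdd_injective k l))

noncomputable def stdRight (π : Perm (Fin (k + l))) : Perm (Fin l) :=
  rankPerm (leftValues π)ᶜ (card_compl_of_card_eq (card_leftValues π))
    (apply_natAdd_mem_compl_leftValues π) (π.injective.comp (Fin.natAdd_injective l k))

lemma orderIsoOfFin_stdLeft (π : Perm (Fin (k + l))) (i : Fin k) :
    ((leftValues π).orderIsoOfFin (card_leftValues π) (stdLeft π i) : Fin (k + l)) =
      π (Fin.castAdd l i) :=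
  (eq_rankPerm_iff _ _ _ _).1 rfl i

lemma orderIsoOfFin_stdRight (π : Perm (Fin (k + l))) (i : Fin l) :
    ((leftValues π)ᶜ.orderIsoOfFin (card_compl_of_card_eq (card_leftValues π)) (stdRight π i) :
      Fin (k + l)) = π (Fin.natAdd k i) :=
  (eq_rankPerm_iff _ _ _ _).1 rfl i

lemma isStd_stdLeft (π : Perm (Fin (k + l))) :
    IsStd (fun i => π (Fin.castAdd l i)) (stdLeft π) :=
  isStd_rankPerm _ _ _ _

lemma isStd_stdRight (π : Perm (Fin (k + l))) :
    IsStd (fun i => π (Fin.natAdd k i)) (stdRight π) :=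
  isStd_rankPerm _ _ _ _

lemma concatPerm_eq_iff {σ : Perm (Fin k)} {τ : Perm (Fin l)} {A : Finset (Fin (k + l))}
    {hA : A.card = k} {π : Perm (Fin (k + l))} :
    concatPerm σ τ A hA = π ↔ A = leftValues π ∧ σ = stdLeft π ∧ τ = stdRight π := by
  refine ⟨fun h => ?_, ?_⟩
  · obtain rfl : A = leftValues π := by rw [← h, leftValues_concatPerm]
    refine ⟨rfl, (eq_rankPerm_iff _ _ _ _).2 fun i => ?_, (eq_rankPerm_iff _ _ _ _).2 fun i => ?_⟩
    · have := concatPerm_castAdd σ τ hA i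
      rw [h] at this
      exact this.symm
    · have := concatPerm_natAdd σ τ hA i
      rw [h] at this
      exact this.symm
  · rintro ⟨rfl, rfl, rfl⟩
    refine Equiv.ext fun j => ?_
    induction j using Fin.addCases with
    | left i => exact (concatPerm_castAdd ..).trans (orderIsoOfFin_stdLeft π i)
    | right i => exact (concatPerm_natAdd ..).trans (orderIsoOfFin_stdRight π i)

lemma mem_mrProd {σ : Perm (Fin k)} {τ : Perm (Fin l)} {π : Perm (Fin (k + l))} :
    π ∈ mrProd σ τ ↔ stdLeft π = σ ∧ stdRight π = τ := by
  simp only [mrProd, Multiset.mem_map, Finset.mem_val, Finset.mem_attach, true_and,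
    concatPerm_eq_iff, Subtype.exists, Finset.mem_filter, Finset.mem_univ]
  constructor
  · rintro ⟨A, -, rfl, rfl, rfl⟩
    exact ⟨rfl, rfl⟩
  · rintro ⟨rfl, rfl⟩
    exact ⟨leftValues π, card_leftValues π, rfl, rfl, rfl⟩

lemma nodup_mrProd (σ : Perm (Fin k)) (τ : Perm (Fin l)) : (mrProd σ τ).Nodup := by
  refine (Finset.nodup _).map fun A B h => Subtype.ext ?_
  rw [(concatPerm_eq_iff.1 h).1, leftValues_concatPerm]

lemma mrProdSum_val_eq_filter (S : Finset (Perm (Fin k))) (T : Finset (Perm (Fin l))) :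
    mrProdSum S.val T.val = (Finset.univ.filter fun π => stdLeft π ∈ S ∧ stdRight π ∈ T).val := by
  refine Multiset.ext.2 fun π => ?_
  rw [Multiset.count_eq_of_nodup (Finset.nodup _), mrProdSum, Multiset.count_bind]
  simp only [Multiset.count_bind, Multiset.count_eq_of_nodup (nodup_mrProd _ _), mem_mrProd]
  change (∑ σ ∈ S, ∑ τ ∈ T, if stdLeft π = σ ∧ stdRight π = τ then 1 else 0) = _
  simp [ite_and, Finset.sum_ite_eq]

end concatPerm

section Psi

lemma numNodes_psi {n : ℕ} (π : Perm (Fin n)) : BinaryTree.numNodes (Psi π) = n := by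
  rw [Psi, numNodes_shapeOfList, List.length_ofFn]

lemma psi_eq_of_isStd {m n : ℕ} {u : Fin m → Fin n} {σ : Perm (Fin m)} (h : IsStd u σ) :
    Psi σ = shapeOfList (List.ofFn fun i => (u i : ℕ)) :=
  (samePattern_ofFn_of_isStd h).shapeOfList_eq

variable {k l : ℕ}

lemma psi_stdLeft (π : Perm (Fin (k + l))) : Psi (stdLeft π) = (Psi π).takeInorder k := by
  rw [psi_eq_of_isStd (isStd_stdLeft π), Psi, ← shapeOfList_take]
  congr 1
  exact List.ext_getElem (by simp) fun i _ _ => by simp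

lemma psi_stdRight (π : Perm (Fin (k + l))) : Psi (stdRight π) = (Psi π).dropInorder k := by
  rw [psi_eq_of_isStd (isStd_stdRight π), Psi, ← shapeOfList_drop]
  congr 1
  exact List.ext_getElem (by simp) fun i _ _ => by simp

lemma count_psiStar {n : ℕ} (T : BinaryTree Unit) (π : Perm (Fin n)) :
    (PsiStar n T).count π = if Psi π = T then 1 else 0 := by
  rw [PsiStar, Multiset.count_eq_of_nodup (Finset.nodup _)]
  simp

lemma val_filter_psi_eq_bind_psiStar {n : ℕ} (p : BinaryTree Unit → Prop) [DecidablePred p] :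
    (Finset.univ.filter fun π : Perm (Fin n) => p (Psi π)).val =
      ((Finset.univ.image (Psi (n := n))).filter p).val.bind (PsiStar n) := by
  refine Multiset.ext.2 fun π => ?_
  rw [Multiset.count_bind, Multiset.count_eq_of_nodup (Finset.nodup _)]
  change _ = ∑ T ∈ (Finset.univ.image Psi).filter p, (PsiStar n T).count π
  simp [count_psiStar, Finset.sum_ite_eq]

end Psi

theorem psiStar_mul_closed_general {k l : ℕ} (T₁ T₂ : Tree Unit) :
    ∃ M : Multiset (Tree Unit), (∀ T ∈ M, T.numNodes = k + l) ∧
      mrProdSum (PsiStar k T₁) (PsiStar l T₂) = M.bind fun T => PsiStar (k + l) T := by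
  refine ⟨((Finset.univ.image (Psi (n := k + l))).filter
    fun T => T.takeInorder k = T₁ ∧ T.dropInorder k = T₂).val, fun T hT => ?_, ?_⟩
  · obtain ⟨π, -, rfl⟩ := Finset.mem_image.1 (Finset.mem_filter.1 hT).1
    exact numNodes_psi π
  · rw [← val_filter_psi_eq_bind_psiStar, PsiStar, PsiStar, mrProdSum_val_eq_filter]
    simp only [Finset.mem_filter, Finset.mem_univ, true_and, psi_stdLeft, psi_stdRight]

/-- The image of `Ψ*` is closed under the Malvenuto–Reutenauer product: for binary trees
`T₁ ∈ Y_k` and `T₂ ∈ Y_l`, the product `Ψ*(T₁) * Ψ*(T₂)` is a sum of elements `Ψ*(T)`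
over a multiset `M` of trees `T ∈ Y_{k+l}`. -/
theorem psiStar_mul_closed {k l : ℕ} (T₁ T₂ : Tree Unit)
    (h₁ : T₁.numNodes = k) (h₂ : T₂.numNodes = l) :
    ∃ M : Multiset (Tree Unit), (∀ T ∈ M, T.numNodes = k + l) ∧
      mrProdSum (PsiStar k T₁) (PsiStar l T₂) = M.bind fun T => PsiStar (k + l) T :=
  psiStar_mul_closed_general T₁ T₂
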